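/- Let σ : ℕ → ℚ satisfy σ 0 = 0, σ 1 = 1/2 and, for every n ≥ 2, σ n = (1/2)·Σ_{l=1}^{n-1} σ l · σ (n-l); let κ : ℕ → ℚ satisfy κ 0 = 1 and, for every n ≥ 1, κ n = Σ_{m=1}^{n} κ (n-m) · σ m. Then the generating series S := Σ σ n Xⁿ and K := Σ κ n Xⁿ in ℚ[[X]] satisfy S·K = K - 1 (equivalently K·(1 - S) = 1), and consequently K²·(1 - X) = 1, i.e. K is the formal power series of 1/√(1-x). -/

import Mathlib

/-!
The recurrence for `σ` is a halved self-convolution, so `S² = 2S - X`, i.e. `(1 - S)² = 1 - X`.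
The recurrence for `κ` says `K = 1 + S K`, so `K` inverts `1 - S` and therefore `K² (1 - X) = 1`.
-/

open PowerSeries

namespace PowerSeries

variable {R : Type*}

theorem coeff_mk_mul_mk_eq_sum_Icc [CommSemiring R] {a : ℕ → R} (b : ℕ → R) (ha : a 0 = 0)
    (n : ℕ) : coeff n (mk a * mk b) = ∑ m ∈ Finset.Icc 1 n, a m * b (n - m) := by
  rw [coeff_mul, Finset.Nat.sum_antidiagonal_eq_sum_range_succ_mk, Finset.range_eq_Ico,
    Finset.sum_eq_sum_Ico_succ_bot n.succ_pos]
  simp [ha, Finset.Ico_add_one_right_eq_Icc]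

theorem mk_mul_mk_eq_mk_sub_one [CommRing R] {σ κ : ℕ → R} (hσ0 : σ 0 = 0) (hκ0 : κ 0 = 1)
    (hκrec : ∀ n : ℕ, 1 ≤ n → κ n = ∑ m ∈ Finset.Icc 1 n, κ (n - m) * σ m) :
    mk σ * mk κ = mk κ - 1 := by
  ext n
  rw [coeff_mk_mul_mk_eq_sum_Icc κ hσ0]
  rcases Nat.eq_zero_or_pos n with rfl | hn
  · simp [hκ0]
  · simp only [map_sub, coeff_mk, coeff_one, hn.ne', if_false, sub_zero, hκrec n hn, mul_comm]

theorem one_sub_mk_sq_eq_one_sub_X [Field R] [NeZero (2 : R)] {σ : ℕ → R} (hσ0 : σ 0 = 0)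
    (hσ1 : σ 1 = 1 / 2)
    (hσrec : ∀ n : ℕ, 2 ≤ n → σ n = (1 / 2) * ∑ l ∈ Finset.Ico 1 n, σ l * σ (n - l)) :
    (1 - mk σ) ^ 2 = 1 - X := by
  suffices hsq : mk σ * mk σ = mk σ + mk σ - X by linear_combination hsq
  ext n
  rw [coeff_mk_mul_mk_eq_sum_Icc σ hσ0]
  rcases n with _ | _ | n
  · simp [hσ0]
  · simp [hσ0, hσ1, coeff_X, -one_div, add_halves]
  · rw [← Finset.Ico_add_one_right_eq_Icc, Finset.sum_Ico_succ_top (by omega)]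
    simp only [map_sub, map_add, coeff_mk, coeff_X, Nat.sub_self, hσ0, mul_zero,
      add_zero, if_neg (by omega : n + 1 + 1 ≠ 1), sub_zero]
    rw [hσrec (n + 1 + 1) (by omega)]
    field_simp
    ring

end PowerSeries

theorem genfun_kappa_inv_sqrt (σ κ : ℕ → ℚ)
    (hσ0 : σ 0 = 0) (hσ1 : σ 1 = 1/2)
    (hσrec : ∀ n : ℕ, 2 ≤ n → σ n = (1/2) * ∑ l ∈ Finset.Ico 1 n, σ l * σ (n - l))
    (hκ0 : κ 0 = 1)
    (hκrec : ∀ n : ℕ, 1 ≤ n → κ n = ∑ m ∈ Finset.Icc 1 n, κ (n - m) * σ m) :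
    let S : ℚ⟦X⟧ := PowerSeries.mk σ
    let K : ℚ⟦X⟧ := PowerSeries.mk κ
    S * K = K - 1 ∧ K * (1 - S) = 1 ∧ K ^ 2 * (1 - PowerSeries.X) = 1 := by
  intro S K
  have hSK : S * K = K - 1 := mk_mul_mk_eq_mk_sub_one hσ0 hκ0 hκrec
  have hKS : K * (1 - S) = 1 := by linear_combination -hSK
  have hS : (1 - S) ^ 2 = 1 - X := one_sub_mk_sq_eq_one_sub_X hσ0 hσ1 hσrec
  exact ⟨hSK, hKS, by linear_combination (-K ^ 2) * hS + (K * (1 - S) + 1) * hKS⟩
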